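/- Let H, H₁ be complex Hilbert spaces, p > 0, C₀ ≥ 0, and let B, B′ : H → H₁ be compact operators. If s_j(B) j^{1/p} → C₀ and s_j(B′) j^{1/p} → 0 as j → ∞, then s_j(B + B′) j^{1/p} → C₀ as j → ∞. -/

import Mathlib

/-!
Singular numbers satisfy the Ky Fan inequality `s_{j+k+1}(A + B) ≤ s_{j+1}(A) + s_{k+1}(B)`,
because ranks of finite-rank approximants add. Applied to `B + B'` and to `B = (B + B') - B'`
with `k = ⌊ε n⌋`, it traps `s_n(B + B') n^{1/p}` between
`(C₀ - o(1)) (1 + ε)^{-1/p} - o(1) ε^{-1/p}` and `(C₀ + o(1)) (1 - ε)^{-1/p} + o(1) ε^{-1/p}`;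
letting `ε → 0` gives the limit `C₀`.
-/

open Filter
open scoped Topology

noncomputable section

/-- The `j`-th singular value (approximation number) of a bounded operator between
Hilbert spaces: `s_j(B) = inf{‖B − F‖ : F of rank < j}`. -/
def sNum {H H₁ : Type*} [NormedAddCommGroup H] [InnerProductSpace ℂ H]
    [NormedAddCommGroup H₁] [InnerProductSpace ℂ H₁] (B : H →L[ℂ] H₁) (j : ℕ) : ℝ :=
  sInf {r : ℝ | ∃ F : H →L[ℂ] H₁,
    Module.rank ℂ (LinearMap.range (F : H →ₗ[ℂ] H₁)) < (j : Cardinal) ∧ ‖B - F‖ = r}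


section SingularNumbers

variable {H H₁ : Type*} [NormedAddCommGroup H] [InnerProductSpace ℂ H]
  [NormedAddCommGroup H₁] [InnerProductSpace ℂ H₁]

lemma sNum_nonneg (B : H →L[ℂ] H₁) (j : ℕ) : 0 ≤ sNum B j :=
  Real.sInf_nonneg fun _ ⟨_, _, hF⟩ => hF ▸ norm_nonneg _

lemma sNum_succ_le_norm_sub (B F : H →L[ℂ] H₁) {j : ℕ}
    (hF : Module.rank ℂ (LinearMap.range (F : H →ₗ[ℂ] H₁)) ≤ j) :
    sNum B (j + 1) ≤ ‖B - F‖ :=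
  csInf_le ⟨0, fun _ ⟨_, _, hG⟩ => hG ▸ norm_nonneg _⟩
    ⟨F, by rwa [Nat.cast_succ, Cardinal.lt_natCast_add_one_iff], rfl⟩

lemma exists_rank_le_norm_sub_lt (B : H →L[ℂ] H₁) (j : ℕ) {ε : ℝ} (hε : 0 < ε) :
    ∃ F : H →L[ℂ] H₁, Module.rank ℂ (LinearMap.range (F : H →ₗ[ℂ] H₁)) ≤ j ∧
      ‖B - F‖ < sNum B (j + 1) + ε := by
  have hzero : ‖B - 0‖ ∈ {r : ℝ | ∃ F : H →L[ℂ] H₁,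
      Module.rank ℂ (LinearMap.range (F : H →ₗ[ℂ] H₁)) < ((j + 1 : ℕ) : Cardinal) ∧
        ‖B - F‖ = r} :=
    ⟨0, by simp, rfl⟩
  obtain ⟨_, ⟨F, hF, rfl⟩, hlt⟩ := exists_lt_of_csInf_lt ⟨_, hzero⟩ (lt_add_of_pos_right _ hε)
  rw [Nat.cast_succ, Cardinal.lt_natCast_add_one_iff] at hF
  exact ⟨F, hF, hlt⟩

lemma sNum_neg (B : H →L[ℂ] H₁) (j : ℕ) : sNum (-B) j = sNum B j := by
  unfold sNum
  congr 1
  ext r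
  constructor <;> rintro ⟨F, hF, rfl⟩ <;>
    refine ⟨-F, by rwa [ContinuousLinearMap.toLinearMap_neg, LinearMap.range_neg], ?_⟩
  all_goals rw [← norm_neg]; congr 1; abel

/-- The Ky Fan inequality. -/
theorem sNum_add_le (A B : H →L[ℂ] H₁) (j k : ℕ) :
    sNum (A + B) (j + k + 1) ≤ sNum A (j + 1) + sNum B (k + 1) := by
  refine le_of_forall_pos_le_add fun ε hε => ?_
  obtain ⟨F, hF, hAF⟩ := exists_rank_le_norm_sub_lt A j (half_pos hε)
  obtain ⟨G, hG, hBG⟩ := exists_rank_le_norm_sub_lt B k (half_pos hε)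
  have hrank : Module.rank ℂ (LinearMap.range ((F + G : H →L[ℂ] H₁) : H →ₗ[ℂ] H₁)) ≤
      ((j + k : ℕ) : Cardinal) := by
    rw [Nat.cast_add]
    exact (LinearMap.rank_add_le (F : H →ₗ[ℂ] H₁) G).trans (add_le_add hF hG)
  calc sNum (A + B) (j + k + 1) ≤ ‖(A + B) - (F + G)‖ := sNum_succ_le_norm_sub _ _ hrank
    _ ≤ ‖A - F‖ + ‖B - G‖ := by
        rw [add_sub_add_comm]
        exact norm_add_le _ _
    _ ≤ sNum A (j + 1) + sNum B (k + 1) + ε := by linarith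

theorem sNum_le_sNum_add_add_sNum (A B : H →L[ℂ] H₁) (j k : ℕ) :
    sNum A (j + k + 1) ≤ sNum (A + B) (j + 1) + sNum B (k + 1) := by
  simpa [sNum_neg] using sNum_add_le (A + B) (-B) j k

end SingularNumbers

theorem tendsto_of_forall_eventually_bounds {ι κ α : Type*} [LinearOrder α] [TopologicalSpace α]
    [OrderTopology α] {l : Filter ι} {l' : Filter κ} [l'.NeBot] {f : ι → α} {U D : κ → α}
    {C : α} (hU : Tendsto U l' (𝓝 C))
    (hfU : ∀ᶠ ε in l', ∃ g : ι → α, Tendsto g l (𝓝 (U ε)) ∧ f ≤ᶠ[l] g)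
    (hD : Tendsto D l' (𝓝 C))
    (hfD : ∀ᶠ ε in l', ∃ g : ι → α, Tendsto g l (𝓝 (D ε)) ∧ g ≤ᶠ[l] f) :
    Tendsto f l (𝓝 C) := by
  refine tendsto_order.2 ⟨fun x hx => ?_, fun x hx => ?_⟩
  · obtain ⟨ε, hε, g, hg, hgf⟩ := ((hD.eventually (lt_mem_nhds hx)).and hfD).exists
    filter_upwards [hg.eventually (lt_mem_nhds hε), hgf] with n h1 h2 using h1.trans_le h2
  · obtain ⟨ε, hε, g, hg, hfg⟩ := ((hU.eventually (gt_mem_nhds hx)).and hfU).exists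
    filter_upwards [hfg, hg.eventually (gt_mem_nhds hε)] with n h1 h2 using h1.trans_lt h2

section Asymptotics

variable {a b c : ℕ → ℝ} {r ε : ℝ}

lemma tendsto_sub_nat_floor_mul_atTop (hε₀ : 0 ≤ ε) (hε₁ : ε < 1) :
    Tendsto (fun n : ℕ => n - ⌊ε * n⌋₊) atTop atTop := by
  rw [← tendsto_natCast_atTop_iff (R := ℝ)]
  refine tendsto_atTop_mono (fun n => ?_)
    (tendsto_natCast_atTop_atTop.const_mul_atTop (sub_pos.2 hε₁))
  have hfloor : (⌊ε * n⌋₊ : ℝ) ≤ ε * n := Nat.floor_le (by positivity)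
  have hfloor_le : ⌊ε * (n : ℝ)⌋₊ ≤ n := Nat.floor_le_of_le (by nlinarith)
  rw [Nat.cast_sub hfloor_le]
  linarith

lemma mul_rpow_le_mul_rpow_div_rpow {s t x y : ℝ} (hs : 0 ≤ s) (ht : 0 < t) (hx : 0 ≤ x)
    (hr : 0 ≤ r) (h : t * x ≤ y) : s * x ^ r ≤ s * y ^ r / t ^ r := by
  rw [le_div_iff₀ (Real.rpow_pos_of_pos ht r), mul_assoc, ← Real.mul_rpow hx ht.le]
  gcongr
  linarith

lemma mul_rpow_div_rpow_le_mul_rpow {s t x y : ℝ} (hs : 0 ≤ s) (ht : 0 < t) (hy : 0 ≤ y)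
    (hr : 0 ≤ r) (h : y ≤ t * x) : s * y ^ r / t ^ r ≤ s * x ^ r := by
  rw [div_le_iff₀ (Real.rpow_pos_of_pos ht r), mul_assoc, ← Real.mul_rpow (by nlinarith) ht.le]
  gcongr
  linarith

lemma mul_rpow_le_of_le_add (hup : ∀ j k, c (j + k + 1) ≤ a (j + 1) + b (k + 1))
    (ha : ∀ n, 0 ≤ a n) (hb : ∀ n, 0 ≤ b n) (hr : 0 ≤ r) (hε₀ : 0 < ε) (hε₁ : ε < 1)
    {n : ℕ} (hn : 0 < n) :
    c n * (n : ℝ) ^ r ≤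
      a (n - ⌊ε * n⌋₊) * ((n - ⌊ε * n⌋₊ : ℕ) : ℝ) ^ r / (1 - ε) ^ r +
        b (⌊ε * n⌋₊ + 1) * ((⌊ε * n⌋₊ + 1 : ℕ) : ℝ) ^ r / ε ^ r := by
  set k := ⌊ε * n⌋₊
  have hk_le : (k : ℝ) ≤ ε * n := Nat.floor_le (by positivity)
  have hk_lt : ε * n < k + 1 := Nat.lt_floor_add_one _
  have hkn : k < n := by
    have : (0 : ℝ) < n := by exact_mod_cast hn
    exact_mod_cast (show (k : ℝ) < n by nlinarith)
  have hsplit : c n ≤ a (n - k) + b (k + 1) := by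
    simpa [show n - k - 1 + k + 1 = n by omega, show n - k - 1 + 1 = n - k by omega]
      using hup (n - k - 1) k
  calc c n * (n : ℝ) ^ r ≤ (a (n - k) + b (k + 1)) * (n : ℝ) ^ r := by gcongr
    _ = a (n - k) * (n : ℝ) ^ r + b (k + 1) * (n : ℝ) ^ r := add_mul _ _ _
    _ ≤ _ := by
      gcongr
      · refine mul_rpow_le_mul_rpow_div_rpow (ha _) (sub_pos.2 hε₁) n.cast_nonneg hr ?_
        rw [Nat.cast_sub hkn.le]
        linarith
      · refine mul_rpow_le_mul_rpow_div_rpow (hb _) hε₀ n.cast_nonneg hr ?_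
        push_cast
        linarith

lemma le_mul_rpow_of_le_add (hlow : ∀ j k, a (j + k + 1) ≤ c (j + 1) + b (k + 1))
    (ha : ∀ n, 0 ≤ a n) (hb : ∀ n, 0 ≤ b n) (hr : 0 ≤ r) (hε₀ : 0 < ε) {n : ℕ} (hn : 0 < n) :
    a (n + ⌊ε * n⌋₊) * ((n + ⌊ε * n⌋₊ : ℕ) : ℝ) ^ r / (1 + ε) ^ r -
        b (⌊ε * n⌋₊ + 1) * ((⌊ε * n⌋₊ + 1 : ℕ) : ℝ) ^ r / ε ^ r ≤
      c n * (n : ℝ) ^ r := by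
  set k := ⌊ε * n⌋₊
  have hk_le : (k : ℝ) ≤ ε * n := Nat.floor_le (by positivity)
  have hk_lt : ε * n < k + 1 := Nat.lt_floor_add_one _
  have hsplit : a (n + k) ≤ c n + b (k + 1) := by
    simpa [show n - 1 + k + 1 = n + k by omega, show n - 1 + 1 = n by omega]
      using hlow (n - 1) k
  calc _ ≤ a (n + k) * (n : ℝ) ^ r - b (k + 1) * (n : ℝ) ^ r := by
        gcongr
        · refine mul_rpow_div_rpow_le_mul_rpow (ha _) (by linarith) (by positivity) hr ?_
          push_cast
          linarith
        · refine mul_rpow_le_mul_rpow_div_rpow (hb _) hε₀ n.cast_nonneg hr ?_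
          push_cast
          linarith
    _ = (a (n + k) - b (k + 1)) * (n : ℝ) ^ r := (sub_mul _ _ _).symm
    _ ≤ c n * (n : ℝ) ^ r := by gcongr; linarith

theorem tendsto_mul_rpow_of_le_add {C : ℝ} (hr : 0 ≤ r) (ha : ∀ n, 0 ≤ a n) (hb : ∀ n, 0 ≤ b n)
    (hup : ∀ j k, c (j + k + 1) ≤ a (j + 1) + b (k + 1))
    (hlow : ∀ j k, a (j + k + 1) ≤ c (j + 1) + b (k + 1))
    (haC : Tendsto (fun n : ℕ => a n * (n : ℝ) ^ r) atTop (𝓝 C))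
    (hb0 : Tendsto (fun n : ℕ => b n * (n : ℝ) ^ r) atTop (𝓝 0)) :
    Tendsto (fun n : ℕ => c n * (n : ℝ) ^ r) atTop (𝓝 C) := by
  have hsmall : ∀ᶠ ε in 𝓝[>] (0 : ℝ), ε ∈ Set.Ioo 0 1 := Ioo_mem_nhdsGT one_pos
  have hfloor_succ {ε : ℝ} (hε : 0 < ε) : Tendsto (fun n : ℕ => ⌊ε * n⌋₊ + 1) atTop atTop :=
    (tendsto_add_atTop_nat 1).comp (tendsto_nat_floor_mul_atTop ε hε)
  have hadd_floor {ε : ℝ} : Tendsto (fun n : ℕ => n + ⌊ε * n⌋₊) atTop atTop :=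
    tendsto_atTop_mono (fun n => Nat.le_add_right n _) tendsto_id
  have hlim {f : ℝ → ℝ} (hf : Continuous f) (hf0 : f 0 = 1) :
      Tendsto (fun ε => C / f ε ^ r) (𝓝[>] 0) (𝓝 C) := by
    have hcont : ContinuousAt (fun ε => C / f ε ^ r) 0 :=
      continuousAt_const.div (hf.continuousAt.rpow_const (Or.inr hr)) (by simp [hf0])
    simpa [hf0] using hcont.tendsto.mono_left nhdsWithin_le_nhds
  refine tendsto_of_forall_eventually_bounds (l' := 𝓝[>] (0 : ℝ)) (U := fun ε => C / (1 - ε) ^ r)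
    (D := fun ε => C / (1 + ε) ^ r) ?_ ?_ ?_ ?_
  · exact hlim (f := fun ε => 1 - ε) (by fun_prop) (sub_zero 1)
  · filter_upwards [hsmall] with ε ⟨hε₀, hε₁⟩
    refine ⟨_, ?_, eventually_atTop.2 ⟨1, fun n hn =>
      mul_rpow_le_of_le_add hup ha hb hr hε₀ hε₁ hn⟩⟩
    simpa using ((haC.comp (tendsto_sub_nat_floor_mul_atTop hε₀.le hε₁)).div_const _).add
      ((hb0.comp (hfloor_succ hε₀)).div_const _)
  · exact hlim (f := fun ε => 1 + ε) (by fun_prop) (add_zero 1)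
  · filter_upwards [hsmall] with ε ⟨hε₀, _⟩
    refine ⟨_, ?_, eventually_atTop.2 ⟨1, fun n hn => le_mul_rpow_of_le_add hlow ha hb hr hε₀ hn⟩⟩
    simpa using ((haC.comp hadd_floor).div_const _).sub
      ((hb0.comp (hfloor_succ hε₀)).div_const _)

end Asymptotics

theorem statement1_general {H H₁ : Type*}
    [NormedAddCommGroup H] [InnerProductSpace ℂ H]
    [NormedAddCommGroup H₁] [InnerProductSpace ℂ H₁]
    (p C₀ : ℝ) (hp : 0 < p)
    (B B' : H →L[ℂ] H₁)
    (h1 : Tendsto (fun j : ℕ => sNum B j * (j : ℝ) ^ (1 / p)) atTop (𝓝 C₀))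
    (h2 : Tendsto (fun j : ℕ => sNum B' j * (j : ℝ) ^ (1 / p)) atTop (𝓝 0)) :
    Tendsto (fun j : ℕ => sNum (B + B') j * (j : ℝ) ^ (1 / p)) atTop (𝓝 C₀) :=
  tendsto_mul_rpow_of_le_add (one_div_nonneg.2 hp.le) (sNum_nonneg B) (sNum_nonneg B')
    (sNum_add_le B B') (sNum_le_sNum_add_add_sNum B B') h1 h2

/-- Weyl–Ky Fan theorem: if `s_j(B) j^{1/p} → C₀` and
`s_j(B') j^{1/p} → 0`, then `s_j(B + B') j^{1/p} → C₀`. -/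
theorem statement1 {H H₁ : Type*}
    [NormedAddCommGroup H] [InnerProductSpace ℂ H] [CompleteSpace H]
    [NormedAddCommGroup H₁] [InnerProductSpace ℂ H₁] [CompleteSpace H₁]
    (p C₀ : ℝ) (hp : 0 < p) (hC₀ : 0 ≤ C₀)
    (B B' : H →L[ℂ] H₁)
    (hB : IsCompactOperator (B : H → H₁)) (hB' : IsCompactOperator (B' : H → H₁))
    (h1 : Tendsto (fun j : ℕ => sNum B j * (j : ℝ) ^ (1 / p)) atTop (𝓝 C₀))
    (h2 : Tendsto (fun j : ℕ => sNum B' j * (j : ℝ) ^ (1 / p)) atTop (𝓝 0)) :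
    Tendsto (fun j : ℕ => sNum (B + B') j * (j : ℝ) ^ (1 / p)) atTop (𝓝 C₀) :=
  statement1_general p C₀ hp B B' h1 h2
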